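/- arXiv:1406.0243 — 2 statements merged into one kernel-verified Lean document; each statement's English description precedes it below -/
import Mathlib

section
/- (Fine's theorem.) There exists a coupling of the eight variables in which Pr[A_i1 ≠ A_i2] = 0 for i ∈ {1,2} and Pr[B_1j ≠ B_2j] = 0 for j ∈ {1,2} if and only if marginal selectivity holds, i.e. ⟨A_i1⟩ = ⟨A_i2⟩ and ⟨B_1j⟩ = ⟨B_2j⟩ for all i,j ∈ {1,2}, and max_{i,j∈{1,2}} |⟨A₁₁B₁₁⟩ + ⟨A₁₂B₁₂⟩ + ⟨A₂₁B₂₁⟩ + ⟨A₂₂B₂₂⟩ − 2⟨A_ijB_ij⟩| ≤ 2. -/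
open Finset

noncomputable section

/-- The ±1 value encoded by a Boolean: `true ↦ 1`, `false ↦ -1`. -/
def pm1 (b : Bool) : ℝ := if b then 1 else -1

/-- A joint probability distribution of two ±1-valued random variables,
encoded as a distribution on `Bool × Bool` (with `pm1` giving the ±1 values). -/
structure PairDist where
  p : Bool → Bool → ℝ
  nonneg : ∀ a b, 0 ≤ p a b
  total : (∑ a, ∑ b, p a b) = 1

/-- The expectation of the first variable. -/
def PairDist.expA (d : PairDist) : ℝ := ∑ a, ∑ b, pm1 a * d.p a b

/-- The expectation of the second variable. -/
def PairDist.expB (d : PairDist) : ℝ := ∑ a, ∑ b, pm1 b * d.p a b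

/-- The expectation of the product of the two variables. -/
def PairDist.expAB (d : PairDist) : ℝ := ∑ a, ∑ b, (pm1 a * pm1 b) * d.p a b

/-- A configuration of the eight variables A_ij, B_ij (i,j ∈ {1,2} ↦ Fin 2):
`(f i j).1` is the value of `A_ij` and `(f i j).2` the value of `B_ij`. -/
abbrev Cfg8 := Fin 2 → Fin 2 → Bool × Bool

/-- `μ` is a coupling of the eight variables: a probability distribution on {−1,1}⁸
whose marginal on each pair (A_ij, B_ij) is the given distribution `d i j`. -/
def IsCoupling (d : Fin 2 → Fin 2 → PairDist) (μ : Cfg8 → ℝ) : Prop :=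
  (∀ f, 0 ≤ μ f) ∧ (∑ f, μ f) = 1 ∧
    ∀ i j : Fin 2, ∀ a b : Bool,
      (∑ f, if f i j = (a, b) then μ f else 0) = (d i j).p a b

/-- Pr[A_i1 ≠ A_i2] in a distribution `μ` on the eight variables. -/
def prNeA (μ : Cfg8 → ℝ) (i : Fin 2) : ℝ :=
  ∑ f, if (f i 0).1 ≠ (f i 1).1 then μ f else 0

/-- Pr[B_1j ≠ B_2j] in a distribution `μ` on the eight variables. -/
def prNeB (μ : Cfg8 → ℝ) (j : Fin 2) : ℝ :=
  ∑ f, if (f 0 j).2 ≠ (f 1 j).2 then μ f else 0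

/-- Δ = Pr[A₁₁≠A₁₂] + Pr[A₂₁≠A₂₂] + Pr[B₁₁≠B₂₁] + Pr[B₁₂≠B₂₂]. -/
def Δ (μ : Cfg8 → ℝ) : ℝ := prNeA μ 0 + prNeA μ 1 + prNeB μ 0 + prNeB μ 1

/-- Δ₀: the natural measure of violation of marginal selectivity. -/
def Δ0 (d : Fin 2 → Fin 2 → PairDist) : ℝ :=
  (|(d 0 0).expA - (d 0 1).expA| + |(d 1 0).expA - (d 1 1).expA| +
   |(d 0 0).expB - (d 1 0).expB| + |(d 0 1).expB - (d 1 1).expB|) / 2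

/-- max_{i,j} |⟨A₁₁B₁₁⟩ + ⟨A₁₂B₁₂⟩ + ⟨A₂₁B₂₁⟩ + ⟨A₂₂B₂₂⟩ − 2⟨A_ijB_ij⟩|. -/
def chshMax (d : Fin 2 → Fin 2 → PairDist) : ℝ :=
  max (max |(d 0 0).expAB + (d 0 1).expAB + (d 1 0).expAB + (d 1 1).expAB - 2 * (d 0 0).expAB|
           |(d 0 0).expAB + (d 0 1).expAB + (d 1 0).expAB + (d 1 1).expAB - 2 * (d 0 1).expAB|)
      (max |(d 0 0).expAB + (d 0 1).expAB + (d 1 0).expAB + (d 1 1).expAB - 2 * (d 1 0).expAB|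
           |(d 0 0).expAB + (d 0 1).expAB + (d 1 0).expAB + (d 1 1).expAB - 2 * (d 1 1).expAB|)

/-- Δ_CHSH = ½·max_{i,j}|…| − 1. -/
def ΔCHSH (d : Fin 2 → Fin 2 → PairDist) : ℝ := chshMax d / 2 - 1

set_option maxHeartbeats 2000000

private lemma fine_pick (lT uT lF uF x : ℝ) (h1 : lT + lF ≤ x) (h2 : x ≤ uT + uF)
    (h3 : lT ≤ uT) (h4 : lF ≤ uF) :
    ∃ tT tF : ℝ, tT + tF = x ∧ lT ≤ tT ∧ tT ≤ uT ∧ lF ≤ tF ∧ tF ≤ uF := by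
  refine ⟨max lT (x - uF), x - max lT (x - uF), by ring, le_max_left _ _,
    max_le h3 (by linarith), ?_, ?_⟩
  · have := max_le (show lT ≤ x - lF by linarith) (show x - uF ≤ x - lF by linarith)
    linarith
  · have := le_max_right lT (x - uF); linarith

private lemma fine_glue (rT rF cT cF : ℝ) (h1 : 0 ≤ rT) (h2 : 0 ≤ rF) (h3 : 0 ≤ cT)
    (h4 : 0 ≤ cF) (h : rT + rF = cT + cF) :
    ∃ mTT mTF mFT mFF : ℝ, 0 ≤ mTT ∧ 0 ≤ mTF ∧ 0 ≤ mFT ∧ 0 ≤ mFF ∧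
      mTT + mTF = rT ∧ mFT + mFF = rF ∧ mTT + mFT = cT ∧ mTF + mFF = cF := by
  refine ⟨min rT cT, rT - min rT cT, cT - min rT cT, rF - cT + min rT cT,
    le_min h1 h3, by simp [min_le_left], by simp [min_le_right], ?_, by ring, by ring,
    by ring, by linarith⟩
  rcases min_cases rT cT with ⟨hm, hm'⟩ | ⟨hm, hm'⟩ <;> linarith

private lemma fine_core (p00 p01 p10 p11 : Bool → Bool → ℝ)
    (hA1 : 0 ≤ p00 true true) (hA2 : 0 ≤ p00 true false) (hA3 : 0 ≤ p00 false true)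
    (hA4 : 0 ≤ p00 false false)
    (hB1 : 0 ≤ p01 true true) (hB2 : 0 ≤ p01 true false) (hB3 : 0 ≤ p01 false true)
    (hB4 : 0 ≤ p01 false false)
    (hC1 : 0 ≤ p10 true true) (hC2 : 0 ≤ p10 true false) (hC3 : 0 ≤ p10 false true)
    (hC4 : 0 ≤ p10 false false)
    (hE1 : 0 ≤ p11 true true) (hE2 : 0 ≤ p11 true false) (hE3 : 0 ≤ p11 false true)
    (hE4 : 0 ≤ p11 false false)
    (tA : p00 true true + p00 true false + p00 false true + p00 false false = 1)
    (tB : p01 true true + p01 true false + p01 false true + p01 false false = 1)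
    (tC : p10 true true + p10 true false + p10 false true + p10 false false = 1)
    (tE : p11 true true + p11 true false + p11 false true + p11 false false = 1)
    (sA0T : p00 true true + p00 true false = p01 true true + p01 true false)
    (sA0F : p00 false true + p00 false false = p01 false true + p01 false false)
    (sA1T : p10 true true + p10 true false = p11 true true + p11 true false)
    (sA1F : p10 false true + p10 false false = p11 false true + p11 false false)
    (sB0T : p00 true true + p00 false true = p10 true true + p10 false true)
    (sB0F : p00 true false + p00 false false = p10 true false + p10 false false)
    (sB1T : p01 true true + p01 false true = p11 true true + p11 false true)
    (sB1F : p01 true false + p01 false false = p11 true false + p11 false false)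
    (c00 c01 c10 c11 : ℝ)
    (hc00 : c00 = p00 true true - p00 true false - p00 false true + p00 false false)
    (hc01 : c01 = p01 true true - p01 true false - p01 false true + p01 false false)
    (hc10 : c10 = p10 true true - p10 true false - p10 false true + p10 false false)
    (hc11 : c11 = p11 true true - p11 true false - p11 false true + p11 false false)
    (h00a : c01 + c10 + c11 - c00 ≤ 2) (h00b : -2 ≤ c01 + c10 + c11 - c00)
    (h01a : c00 + c10 + c11 - c01 ≤ 2) (h01b : -2 ≤ c00 + c10 + c11 - c01)
    (h10a : c00 + c01 + c11 - c10 ≤ 2) (h10b : -2 ≤ c00 + c01 + c11 - c10)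
    (h11a : c00 + c01 + c10 - c11 ≤ 2) (h11b : -2 ≤ c00 + c01 + c10 - c11) :
    ∃ w : Bool → Bool → Bool → Bool → ℝ,
      (∀ a1 a2 b1 b2, 0 ≤ w a1 a2 b1 b2) ∧
      (∀ a b, w a true b true + w a true b false + w a false b true + w a false b false
          = p00 a b) ∧
      (∀ a b, w a true true b + w a true false b + w a false true b + w a false false b
          = p01 a b) ∧
      (∀ a b, w true a b true + w true a b false + w false a b true + w false a b false
          = p10 a b) ∧
      (∀ a b, w true a true b + w true a false b + w false a true b + w false a false b
          = p11 a b) := by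
  subst hc00 hc01 hc10 hc11
  set A1 := p00 true true; set A2 := p00 true false; set A3 := p00 false true
  set A4 := p00 false false
  set B1 := p01 true true; set B2 := p01 true false; set B3 := p01 false true
  set B4 := p01 false false
  set C1 := p10 true true; set C2 := p10 true false; set C3 := p10 false true
  set C4 := p10 false false
  set E1 := p11 true true; set E2 := p11 true false; set E3 := p11 false true
  set E4 := p11 false false
  have hLU00 : max 0 (B1 - A2) + max 0 (B3 - A4) ≤ min A1 B1 + min A3 B3 := by
    rcases max_cases 0 (B1 - A2) with ⟨h1, h1'⟩ | ⟨h1, h1'⟩ <;>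
    rcases max_cases 0 (B3 - A4) with ⟨h2, h2'⟩ | ⟨h2, h2'⟩ <;>
    rcases min_cases A1 B1 with ⟨h3, h3'⟩ | ⟨h3, h3'⟩ <;>
    rcases min_cases A3 B3 with ⟨h4, h4'⟩ | ⟨h4, h4'⟩ <;>
    rw [h1, h2, h3, h4] <;> linarith
  have hLU01 : max 0 (B1 - A2) + max 0 (B3 - A4) ≤ min C1 E1 + min C3 E3 := by
    rcases max_cases 0 (B1 - A2) with ⟨h1, h1'⟩ | ⟨h1, h1'⟩ <;>
    rcases max_cases 0 (B3 - A4) with ⟨h2, h2'⟩ | ⟨h2, h2'⟩ <;>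
    rcases min_cases C1 E1 with ⟨h3, h3'⟩ | ⟨h3, h3'⟩ <;>
    rcases min_cases C3 E3 with ⟨h4, h4'⟩ | ⟨h4, h4'⟩ <;>
    rw [h1, h2, h3, h4] <;> linarith
  have hLU10 : max 0 (E1 - C2) + max 0 (E3 - C4) ≤ min A1 B1 + min A3 B3 := by
    rcases max_cases 0 (E1 - C2) with ⟨h1, h1'⟩ | ⟨h1, h1'⟩ <;>
    rcases max_cases 0 (E3 - C4) with ⟨h2, h2'⟩ | ⟨h2, h2'⟩ <;>
    rcases min_cases A1 B1 with ⟨h3, h3'⟩ | ⟨h3, h3'⟩ <;>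
    rcases min_cases A3 B3 with ⟨h4, h4'⟩ | ⟨h4, h4'⟩ <;>
    rw [h1, h2, h3, h4] <;> linarith
  have hLU11 : max 0 (E1 - C2) + max 0 (E3 - C4) ≤ min C1 E1 + min C3 E3 := by
    rcases max_cases 0 (E1 - C2) with ⟨h1, h1'⟩ | ⟨h1, h1'⟩ <;>
    rcases max_cases 0 (E3 - C4) with ⟨h2, h2'⟩ | ⟨h2, h2'⟩ <;>
    rcases min_cases C1 E1 with ⟨h3, h3'⟩ | ⟨h3, h3'⟩ <;>
    rcases min_cases C3 E3 with ⟨h4, h4'⟩ | ⟨h4, h4'⟩ <;>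
    rw [h1, h2, h3, h4] <;> linarith
  set x : ℝ := max (max 0 (B1 - A2) + max 0 (B3 - A4)) (max 0 (E1 - C2) + max 0 (E3 - C4))
    with hxdef
  obtain ⟨t0T, t0F, ht0, h0Tl, h0Tu, h0Fl, h0Fu⟩ :=
    fine_pick (max 0 (B1 - A2)) (min A1 B1) (max 0 (B3 - A4)) (min A3 B3) x
      (le_max_left _ _) (max_le hLU00 hLU10)
      (max_le (le_min hA1 hB1) (le_min (by linarith) (by linarith)))
      (max_le (le_min hA3 hB3) (le_min (by linarith) (by linarith)))
  obtain ⟨t1T, t1F, ht1, h1Tl, h1Tu, h1Fl, h1Fu⟩ :=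
    fine_pick (max 0 (E1 - C2)) (min C1 E1) (max 0 (E3 - C4)) (min C3 E3) x
      (le_max_right _ _) (max_le hLU01 hLU11)
      (max_le (le_min hC1 hE1) (le_min (by linarith) (by linarith)))
      (max_le (le_min hC3 hE3) (le_min (by linarith) (by linarith)))
  have l0T1 : (0:ℝ) ≤ max 0 (B1 - A2) := le_max_left _ _
  have l0T2 : B1 - A2 ≤ max 0 (B1 - A2) := le_max_right _ _
  have l0F1 : (0:ℝ) ≤ max 0 (B3 - A4) := le_max_left _ _
  have l0F2 : B3 - A4 ≤ max 0 (B3 - A4) := le_max_right _ _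
  have l1T1 : (0:ℝ) ≤ max 0 (E1 - C2) := le_max_left _ _
  have l1T2 : E1 - C2 ≤ max 0 (E1 - C2) := le_max_right _ _
  have l1F1 : (0:ℝ) ≤ max 0 (E3 - C4) := le_max_left _ _
  have l1F2 : E3 - C4 ≤ max 0 (E3 - C4) := le_max_right _ _
  have u0T1 : min A1 B1 ≤ A1 := min_le_left _ _
  have u0T2 : min A1 B1 ≤ B1 := min_le_right _ _
  have u0F1 : min A3 B3 ≤ A3 := min_le_left _ _
  have u0F2 : min A3 B3 ≤ B3 := min_le_right _ _
  have u1T1 : min C1 E1 ≤ C1 := min_le_left _ _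
  have u1T2 : min C1 E1 ≤ E1 := min_le_right _ _
  have u1F1 : min C3 E3 ≤ C3 := min_le_left _ _
  have u1F2 : min C3 E3 ≤ E3 := min_le_right _ _
  obtain ⟨wa, wb, wc, wd, wan, wbn, wcn, wdn, ga1, ga2, ga3, ga4⟩ :=
    fine_glue t0T t0F t1T t1F (by linarith) (by linarith) (by linarith) (by linarith)
      (by linarith)
  obtain ⟨xa, xb, xc, xd, xan, xbn, xcn, xdn, gb1, gb2, gb3, gb4⟩ :=
    fine_glue (A1 - t0T) (A3 - t0F) (C1 - t1T) (C3 - t1F) (by linarith) (by linarith)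
      (by linarith) (by linarith) (by linarith)
  obtain ⟨ya, yb, yc, yd, yan, ybn, ycn, ydn, gc1, gc2, gc3, gc4⟩ :=
    fine_glue (B1 - t0T) (B3 - t0F) (E1 - t1T) (E3 - t1F) (by linarith) (by linarith)
      (by linarith) (by linarith) (by linarith)
  obtain ⟨za, zb, zc, zd, zan, zbn, zcn, zdn, gd1, gd2, gd3, gd4⟩ :=
    fine_glue (A2 - B1 + t0T) (A4 - B3 + t0F) (C2 - E1 + t1T) (C4 - E3 + t1F)
      (by linarith) (by linarith) (by linarith) (by linarith) (by linarith)
  refine ⟨fun a1 a2 b1 b2 =>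
    cond b1 (cond b2 (cond a1 (cond a2 wa wb) (cond a2 wc wd))
                     (cond a1 (cond a2 xa xb) (cond a2 xc xd)))
            (cond b2 (cond a1 (cond a2 ya yb) (cond a2 yc yd))
                     (cond a1 (cond a2 za zb) (cond a2 zc zd))), ?_, ?_, ?_, ?_, ?_⟩
  · intro a1 a2 b1 b2
    cases a1 <;> cases a2 <;> cases b1 <;> cases b2 <;>
      simp only [cond_true, cond_false] <;> assumption
  · intro a b
    cases a <;> cases b <;> simp only [cond_true, cond_false] <;> linarith
  · intro a b
    cases a <;> cases b <;> simp only [cond_true, cond_false] <;> linarith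
  · intro a b
    cases a <;> cases b <;> simp only [cond_true, cond_false] <;> linarith
  · intro a b
    cases a <;> cases b <;> simp only [cond_true, cond_false] <;> linarith

private lemma fin2 (i : Fin 2) : i = 0 ∨ i = 1 := by omega

private lemma marg_sum {d : Fin 2 → Fin 2 → PairDist} {μ : Cfg8 → ℝ}
    (hc : IsCoupling d μ) (i j : Fin 2) (g : Bool → Bool → ℝ) :
    (∑ a, ∑ b, g a b * (d i j).p a b) = ∑ f, g (f i j).1 (f i j).2 * μ f := by
  obtain ⟨-, -, h3⟩ := hc
  calc (∑ a, ∑ b, g a b * (d i j).p a b)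
      = ∑ a, ∑ b, g a b * (∑ f, if f i j = (a, b) then μ f else 0) := by
        simp only [h3]
    _ = ∑ a, ∑ b, ∑ f : Cfg8, (if f i j = (a, b) then g a b * μ f else 0) := by
        simp only [Finset.mul_sum, mul_ite, mul_zero]
    _ = ∑ ab : Bool × Bool, ∑ f : Cfg8, (if f i j = ab then g ab.1 ab.2 * μ f else 0) := by
        simp [Fintype.sum_prod_type]
    _ = ∑ f : Cfg8, ∑ ab : Bool × Bool, (if f i j = ab then g ab.1 ab.2 * μ f else 0) :=
        Finset.sum_comm
    _ = ∑ f : Cfg8, g (f i j).1 (f i j).2 * μ f := by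
        refine Finset.sum_congr rfl fun f _ => ?_
        rw [Finset.sum_ite_eq]
        simp

private lemma supp_zero {μ : Cfg8 → ℝ} (hpos : ∀ f, 0 ≤ μ f) {P : Cfg8 → Prop}
    [DecidablePred P] (h : (∑ f, if P f then μ f else 0) = 0) :
    ∀ f, P f → μ f = 0 := by
  intro f hf
  have := (Finset.sum_eq_zero_iff_of_nonneg (fun g _ => by
    split_ifs; exacts [hpos g, le_refl 0])).mp h f (Finset.mem_univ f)
  simpa [hf] using this

private lemma fine_fwd (d : Fin 2 → Fin 2 → PairDist) (μ : Cfg8 → ℝ) (hc : IsCoupling d μ)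
    (hA : ∀ i, prNeA μ i = 0) (hB : ∀ j, prNeB μ j = 0) :
    (∀ i, (d i 0).expA = (d i 1).expA) ∧ (∀ j, (d 0 j).expB = (d 1 j).expB) ∧
      chshMax d ≤ 2 := by
  have hpos := hc.1
  have e0 : ∀ f : Cfg8, μ f ≠ 0 → (f 0 0).1 = (f 0 1).1 := fun f hf => by
    by_contra hne; exact hf (supp_zero hpos (hA 0) f hne)
  have e1 : ∀ f : Cfg8, μ f ≠ 0 → (f 1 0).1 = (f 1 1).1 := fun f hf => by
    by_contra hne; exact hf (supp_zero hpos (hA 1) f hne)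
  have e2 : ∀ f : Cfg8, μ f ≠ 0 → (f 0 0).2 = (f 1 0).2 := fun f hf => by
    by_contra hne; exact hf (supp_zero hpos (hB 0) f hne)
  have e3 : ∀ f : Cfg8, μ f ≠ 0 → (f 0 1).2 = (f 1 1).2 := fun f hf => by
    by_contra hne; exact hf (supp_zero hpos (hB 1) f hne)
  have hEA : ∀ i j : Fin 2, (d i j).expA = ∑ f, pm1 (f i j).1 * μ f := fun i j =>
    marg_sum hc i j (fun a _ => pm1 a)
  have hEB : ∀ i j : Fin 2, (d i j).expB = ∑ f, pm1 (f i j).2 * μ f := fun i j =>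
    marg_sum hc i j (fun _ b => pm1 b)
  have hEAB : ∀ i j : Fin 2, (d i j).expAB = ∑ f, pm1 (f i j).1 * pm1 (f i j).2 * μ f :=
    fun i j => marg_sum hc i j (fun a b => pm1 a * pm1 b)
  refine ⟨?_, ?_, ?_⟩
  · intro i
    rcases fin2 i with rfl | rfl
    · rw [hEA 0 0, hEA 0 1]
      refine Finset.sum_congr rfl fun f _ => ?_
      by_cases hf : μ f = 0
      · rw [hf, mul_zero, mul_zero]
      · rw [e0 f hf]
    · rw [hEA 1 0, hEA 1 1]
      refine Finset.sum_congr rfl fun f _ => ?_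
      by_cases hf : μ f = 0
      · rw [hf, mul_zero, mul_zero]
      · rw [e1 f hf]
  · intro j
    rcases fin2 j with rfl | rfl
    · rw [hEB 0 0, hEB 1 0]
      refine Finset.sum_congr rfl fun f _ => ?_
      by_cases hf : μ f = 0
      · rw [hf, mul_zero, mul_zero]
      · rw [e2 f hf]
    · rw [hEB 0 1, hEB 1 1]
      refine Finset.sum_congr rfl fun f _ => ?_
      by_cases hf : μ f = 0
      · rw [hf, mul_zero, mul_zero]
      · rw [e3 f hf]
  · have key : ∀ c : Cfg8 → ℝ, (∀ f, μ f ≠ 0 → |c f| ≤ 2) → |∑ f, c f * μ f| ≤ 2 := by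
      intro c hcf
      have h2 : (∑ f, 2 * μ f) = 2 := by rw [← Finset.mul_sum, hc.2.1, mul_one]
      calc |∑ f, c f * μ f| ≤ ∑ f, |c f * μ f| := Finset.abs_sum_le_sum_abs _ _
        _ ≤ ∑ f, 2 * μ f := by
            refine Finset.sum_le_sum fun f _ => ?_
            by_cases hf : μ f = 0
            · simp [hf]
            · rw [abs_mul, abs_of_nonneg (hpos f)]
              exact mul_le_mul_of_nonneg_right (hcf f hf) (hpos f)
        _ = 2 := h2
    have hsplit : ∀ i j : Fin 2,
        (d 0 0).expAB + (d 0 1).expAB + (d 1 0).expAB + (d 1 1).expAB - 2 * (d i j).expAB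
        = ∑ f : Cfg8, (pm1 (f 0 0).1 * pm1 (f 0 0).2 + pm1 (f 0 1).1 * pm1 (f 0 1).2
            + pm1 (f 1 0).1 * pm1 (f 1 0).2 + pm1 (f 1 1).1 * pm1 (f 1 1).2
            - 2 * (pm1 (f i j).1 * pm1 (f i j).2)) * μ f := by
      intro i j
      rw [hEAB 0 0, hEAB 0 1, hEAB 1 0, hEAB 1 1, hEAB i j, ← Finset.sum_add_distrib,
        ← Finset.sum_add_distrib, ← Finset.sum_add_distrib, Finset.mul_sum,
        ← Finset.sum_sub_distrib]
      exact Finset.sum_congr rfl fun f _ => by ring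
    rw [chshMax]
    have main : ∀ i j : Fin 2,
        |(d 0 0).expAB + (d 0 1).expAB + (d 1 0).expAB + (d 1 1).expAB - 2 * (d i j).expAB| ≤ 2 := by
      intro i j
      rw [hsplit i j]
      refine key _ fun f hf => ?_
      rw [← e0 f hf, ← e1 f hf, ← e2 f hf, ← e3 f hf]
      have hij : (pm1 (f i j).1 * pm1 (f i j).2) = pm1 (f i 0).1 * pm1 (f 0 j).2 := by
        rcases fin2 i with rfl | rfl <;> rcases fin2 j with rfl | rfl <;>
          simp only [← e0 f hf, ← e1 f hf, ← e2 f hf, ← e3 f hf]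
      rw [hij]
      have hi : (f i 0).1 = (f 0 0).1 ∨ (f i 0).1 = (f 1 0).1 := by
        rcases fin2 i with rfl | rfl <;> simp
      have hj : (f 0 j).2 = (f 0 0).2 ∨ (f 0 j).2 = (f 0 1).2 := by
        rcases fin2 j with rfl | rfl <;> simp
      rcases hi with hi | hi <;> rcases hj with hj | hj <;> rw [hi, hj] <;>
        generalize (f 0 0).1 = p <;> generalize (f 1 0).1 = q <;>
        generalize (f 0 0).2 = r <;> generalize (f 0 1).2 = s <;>
        cases p <;> cases q <;> cases r <;> cases s <;> norm_num [pm1]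
    exact max_le (max_le (main 0 0) (main 0 1)) (max_le (main 1 0) (main 1 1))

/-- The diagonal embedding of a 4-bit configuration into `Cfg8`. -/
private def emb (v : Bool × Bool × Bool × Bool) : Cfg8 := fun i j =>
  (if i = 0 then v.1 else v.2.1, if j = 0 then v.2.2.1 else v.2.2.2)

private lemma pm1_true : pm1 true = 1 := rfl
private lemma pm1_false : pm1 false = -1 := rfl

private lemma fine_bwd (d : Fin 2 → Fin 2 → PairDist)
    (hA : ∀ i, (d i 0).expA = (d i 1).expA) (hB : ∀ j, (d 0 j).expB = (d 1 j).expB)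
    (hch : chshMax d ≤ 2) :
    ∃ μ : Cfg8 → ℝ, IsCoupling d μ ∧ (∀ i, prNeA μ i = 0) ∧ (∀ j, prNeB μ j = 0) := by
  classical
  have tot : ∀ i j : Fin 2, (d i j).p true true + (d i j).p true false
      + (d i j).p false true + (d i j).p false false = 1 := by
    intro i j
    have h := (d i j).total
    simp only [Fintype.sum_bool] at h
    linarith
  have hEA : ∀ i j : Fin 2, (d i j).expA = (d i j).p true true + (d i j).p true false
      - (d i j).p false true - (d i j).p false false := by
    intro i j
    simp only [PairDist.expA, Fintype.sum_bool, pm1_true, pm1_false]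
    ring
  have hEB : ∀ i j : Fin 2, (d i j).expB = (d i j).p true true - (d i j).p true false
      + (d i j).p false true - (d i j).p false false := by
    intro i j
    simp only [PairDist.expB, Fintype.sum_bool, pm1_true, pm1_false]
    ring
  have hEAB : ∀ i j : Fin 2, (d i j).expAB = (d i j).p true true - (d i j).p true false
      - (d i j).p false true + (d i j).p false false := by
    intro i j
    simp only [PairDist.expAB, Fintype.sum_bool, pm1_true, pm1_false]
    ring
  have hA0 := hA 0; have hA1 := hA 1; have hB0 := hB 0; have hB1 := hB 1
  rw [hEA 0 0, hEA 0 1] at hA0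
  rw [hEA 1 0, hEA 1 1] at hA1
  rw [hEB 0 0, hEB 1 0] at hB0
  rw [hEB 0 1, hEB 1 1] at hB1
  rw [chshMax] at hch
  simp only [max_le_iff] at hch
  obtain ⟨⟨m1, m2⟩, m3, m4⟩ := hch
  obtain ⟨n1a, n1b⟩ := abs_le.mp m1
  obtain ⟨n2a, n2b⟩ := abs_le.mp m2
  obtain ⟨n3a, n3b⟩ := abs_le.mp m3
  obtain ⟨n4a, n4b⟩ := abs_le.mp m4
  obtain ⟨w, hw0, hw00, hw01, hw10, hw11⟩ :=
    fine_core (d 0 0).p (d 0 1).p (d 1 0).p (d 1 1).p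
      ((d 0 0).nonneg _ _) ((d 0 0).nonneg _ _) ((d 0 0).nonneg _ _) ((d 0 0).nonneg _ _)
      ((d 0 1).nonneg _ _) ((d 0 1).nonneg _ _) ((d 0 1).nonneg _ _) ((d 0 1).nonneg _ _)
      ((d 1 0).nonneg _ _) ((d 1 0).nonneg _ _) ((d 1 0).nonneg _ _) ((d 1 0).nonneg _ _)
      ((d 1 1).nonneg _ _) ((d 1 1).nonneg _ _) ((d 1 1).nonneg _ _) ((d 1 1).nonneg _ _)
      (tot 0 0) (tot 0 1) (tot 1 0) (tot 1 1)
      (by linarith [tot 0 0, tot 0 1]) (by linarith [tot 0 0, tot 0 1])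
      (by linarith [tot 1 0, tot 1 1]) (by linarith [tot 1 0, tot 1 1])
      (by linarith [tot 0 0, tot 1 0]) (by linarith [tot 0 0, tot 1 0])
      (by linarith [tot 0 1, tot 1 1]) (by linarith [tot 0 1, tot 1 1])
      ((d 0 0).expAB) ((d 0 1).expAB) ((d 1 0).expAB) ((d 1 1).expAB)
      (hEAB 0 0) (hEAB 0 1) (hEAB 1 0) (hEAB 1 1)
      (by linarith) (by linarith) (by linarith) (by linarith)
      (by linarith) (by linarith) (by linarith) (by linarith)
  set W : Bool × Bool × Bool × Bool → ℝ := fun v => w v.1 v.2.1 v.2.2.1 v.2.2.2 with hW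
  refine ⟨fun f => ∑ v : Bool × Bool × Bool × Bool, if f = emb v then W v else 0,
    ⟨?_, ?_, ?_⟩, ?_, ?_⟩
  · intro f
    refine Finset.sum_nonneg fun v _ => ?_
    split_ifs
    · exact hw0 _ _ _ _
    · exact le_rfl
  · rw [Finset.sum_comm]
    simp only [Finset.sum_ite_eq', Finset.mem_univ, if_true]
    simp only [hW, Fintype.sum_prod_type, Fintype.sum_bool]
    linarith [hw00 true true, hw00 true false, hw00 false true, hw00 false false, tot 0 0]
  · intro i j a b
    have step : ∀ f : Cfg8,
        (if f i j = (a, b) then (∑ v : Bool × Bool × Bool × Bool,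
            if f = emb v then W v else 0) else 0)
        = ∑ v : Bool × Bool × Bool × Bool,
            (if f = emb v then (if emb v i j = (a, b) then W v else 0) else 0) := by
      intro f
      by_cases h : f i j = (a, b)
      · rw [if_pos h]
        refine Finset.sum_congr rfl fun v _ => ?_
        by_cases h2 : f = emb v
        · rw [if_pos h2, if_pos h2, if_pos (by rw [← h2]; exact h)]
        · rw [if_neg h2, if_neg h2]
      · rw [if_neg h]
        symm
        refine Finset.sum_eq_zero fun v _ => ?_
        by_cases h2 : f = emb v
        · rw [if_pos h2, if_neg (by rw [← h2]; exact h)]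
        · rw [if_neg h2]
    calc (∑ f : Cfg8, if f i j = (a, b) then (∑ v : Bool × Bool × Bool × Bool,
            if f = emb v then W v else 0) else 0)
        = ∑ f : Cfg8, ∑ v : Bool × Bool × Bool × Bool,
            (if f = emb v then (if emb v i j = (a, b) then W v else 0) else 0) :=
          Finset.sum_congr rfl fun f _ => step f
      _ = ∑ v : Bool × Bool × Bool × Bool, ∑ f : Cfg8,
            (if f = emb v then (if emb v i j = (a, b) then W v else 0) else 0) :=
          Finset.sum_comm
      _ = ∑ v : Bool × Bool × Bool × Bool,
            (if emb v i j = (a, b) then W v else 0) := by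
          simp only [Finset.sum_ite_eq', Finset.mem_univ, if_true]
      _ = (d i j).p a b := by
          rcases fin2 i with rfl | rfl <;> rcases fin2 j with rfl | rfl <;>
            cases a <;> cases b <;>
            simp only [hW, emb, Fintype.sum_prod_type, Fintype.sum_bool, Prod.mk.injEq,
              if_true, if_false, and_true, and_false, true_and, false_and, if_pos rfl,
              reduceIte] <;>
            simp <;>
            linarith [hw00 true true, hw00 true false, hw00 false true, hw00 false false,
              hw01 true true, hw01 true false, hw01 false true, hw01 false false,
              hw10 true true, hw10 true false, hw10 false true, hw10 false false,
              hw11 true true, hw11 true false, hw11 false true, hw11 false false]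
  · intro i
    rw [prNeA]
    refine Finset.sum_eq_zero fun f _ => ?_
    split_ifs with h
    · refine Finset.sum_eq_zero fun v _ => ?_
      rw [if_neg]
      intro h2
      subst h2
      exact h rfl
    · rfl
  · intro j
    rw [prNeB]
    refine Finset.sum_eq_zero fun f _ => ?_
    split_ifs with h
    · refine Finset.sum_eq_zero fun v _ => ?_
      rw [if_neg]
      intro h2
      subst h2
      exact h rfl
    · rfl


/-- **Fine's theorem.** A coupling with identity connections exists iff
marginal selectivity holds and the CHSH inequalities are satisfied. -/
theorem stmt0 (d : Fin 2 → Fin 2 → PairDist) :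
    (∃ μ : Cfg8 → ℝ, IsCoupling d μ ∧ (∀ i, prNeA μ i = 0) ∧ (∀ j, prNeB μ j = 0)) ↔
      ((∀ i, (d i 0).expA = (d i 1).expA) ∧ (∀ j, (d 0 j).expB = (d 1 j).expB) ∧
        chshMax d ≤ 2) := by
  constructor
  · rintro ⟨μ, hc, hA, hB⟩
    exact fine_fwd d μ hc hA hB
  · rintro ⟨hA, hB, hch⟩
    exact fine_bwd d hA hB hch
end
end

section
/- For any joint distribution of two ±1-valued random variables A and B on {−1,1}², the expectations satisfy −1 + |⟨A⟩ + ⟨B⟩| ≤ ⟨AB⟩ ≤ 1 − |⟨A⟩ − ⟨B⟩|; conversely, any triple of reals (⟨A⟩, ⟨B⟩, ⟨AB⟩) satisfying these inequalities (together with |⟨A⟩| ≤ 1 and |⟨B⟩| ≤ 1) arises from a unique joint distribution on {−1,1}². -/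
open Finset

noncomputable section

lemma PairDist.ext' {d d' : PairDist} (h : d.p = d'.p) : d = d' := by
  cases d; cases d'; simpa using h

lemma key (d : PairDist) :
    d.expA = d.p true true + d.p true false - d.p false true - d.p false false ∧
    d.expB = d.p true true - d.p true false + d.p false true - d.p false false ∧
    d.expAB = d.p true true - d.p true false - d.p false true + d.p false false ∧
    d.p true true + d.p true false + d.p false true + d.p false false = 1 := by
  have ht := d.total
  simp [Fintype.sum_bool] at ht
  refine ⟨?_, ?_, ?_, by linarith⟩ <;>
    simp [PairDist.expA, PairDist.expB, PairDist.expAB, pm1, Fintype.sum_bool] <;> ring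

/-- For any joint distribution of two ±1-valued random variables,
−1 + |⟨A⟩+⟨B⟩| ≤ ⟨AB⟩ ≤ 1 − |⟨A⟩−⟨B⟩|; conversely any triple of reals
satisfying these inequalities (with |⟨A⟩| ≤ 1 and |⟨B⟩| ≤ 1) arises from a
unique joint distribution on {−1,1}². -/
theorem stmt18 :
    (∀ d : PairDist, -1 + |d.expA + d.expB| ≤ d.expAB ∧
        d.expAB ≤ 1 - |d.expA - d.expB|) ∧
    (∀ x y z : ℝ, |x| ≤ 1 → |y| ≤ 1 → -1 + |x + y| ≤ z → z ≤ 1 - |x - y| →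
        ∃! d : PairDist, d.expA = x ∧ d.expB = y ∧ d.expAB = z) := by
  constructor
  · intro d
    obtain ⟨ex, ey, ez, ht⟩ := key d
    have h11 := d.nonneg true true
    have h10 := d.nonneg true false
    have h01 := d.nonneg false true
    have h00 := d.nonneg false false
    constructor
    · have h : |d.expA + d.expB| ≤ 1 + d.expAB := by
        rw [abs_le]; constructor <;> linarith
      linarith
    · have h : |d.expA - d.expB| ≤ 1 - d.expAB := by
        rw [abs_le]; constructor <;> linarith
      linarith
  · intro x y z hx hy h3 h4
    have a1 := abs_le.1 (show |x + y| ≤ 1 + z by linarith)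
    have a2 := abs_le.1 (show |x - y| ≤ 1 - z by linarith)
    refine ⟨⟨fun a b => (1 + pm1 a * x + pm1 b * y + pm1 a * pm1 b * z) / 4, ?_, ?_⟩,
      ⟨?_, ?_, ?_⟩, ?_⟩
    · intro a b; cases a <;> cases b <;> simp [pm1] <;> linarith
    · simp [Fintype.sum_bool, pm1]; ring
    · simp [PairDist.expA, pm1, Fintype.sum_bool]; ring
    · simp [PairDist.expB, pm1, Fintype.sum_bool]; ring
    · simp [PairDist.expAB, pm1, Fintype.sum_bool]; ring
    · rintro d' ⟨h1, h2, h5⟩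
      obtain ⟨ex, ey, ez, ht⟩ := key d'
      apply PairDist.ext'
      funext a b
      cases a <;> cases b <;> simp [pm1] <;> linarith
end
end
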